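/- Let X be a separable Banach space and Y a Banach space such that the closed dual unit ball (B_{Y*}, w*) has countable tightness for convex sets in the sense that (B_{Y*}, w*)^ℕ has convex countable tightness. Then the map ξ : (B_{(X ⊗̂_π Y)*}, w*) → (B_{Y*}, w*)^ℕ, ξ(S) := (S_X(xₙ))ₙ where (xₙ) is a fixed dense sequence in B_X, is an affine homeomorphic embedding. -/

import Mathlib

open TensorProduct NormedSpace

section Defs

variable (X Y : Type*) [NormedAddCommGroup X] [NormedSpace ℝ X]
  [NormedAddCommGroup Y] [NormedSpace ℝ Y]

/-- A continuous bilinear form, viewed as a plain bilinear map. -/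
noncomputable def bilinL :
    (X →L[ℝ] Y →L[ℝ] ℝ) →ₗ[ℝ] (X →ₗ[ℝ] Y →ₗ[ℝ] ℝ) :=
  (LinearMap.llcomp ℝ X (Y →L[ℝ] ℝ) (Y →ₗ[ℝ] ℝ) (ContinuousLinearMap.coeLM ℝ)) ∘ₗ
    ContinuousLinearMap.coeLM ℝ

/-- The linear functional on `X ⊗ Y` induced by a continuous bilinear form. -/
noncomputable def tensorEval :
    (X →L[ℝ] Y →L[ℝ] ℝ) →ₗ[ℝ] (X ⊗[ℝ] Y →ₗ[ℝ] ℝ) :=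
  (TensorProduct.lift.equiv (RingHom.id ℝ) X Y ℝ).toLinearMap ∘ₗ bilinL X Y

/-- The weak* topology on the space of continuous bilinear forms on `X × Y`
(identified with the dual of `X ⊗̂_π Y`): the topology of pointwise convergence on
(the dense subspace) `X ⊗ Y`; on bounded sets, such as the dual unit ball below,
it agrees with the weak* topology of `(X ⊗̂_π Y)*`. -/
noncomputable def weakStarTopologyBilin :
    TopologicalSpace (X →L[ℝ] Y →L[ℝ] ℝ) :=
  TopologicalSpace.induced
    (fun S => (fun u : X ⊗[ℝ] Y => tensorEval X Y S u)) inferInstance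

/-- The unit ball of `(X ⊗̂_π Y)*`, i.e. of the continuous bilinear forms on `X × Y`,
endowed (below) with the weak* topology. -/
def dualBallBilin : Type _ := {S : X →L[ℝ] Y →L[ℝ] ℝ // ‖S‖ ≤ 1}

noncomputable instance : TopologicalSpace (dualBallBilin X Y) :=
  TopologicalSpace.induced Subtype.val (weakStarTopologyBilin X Y)

variable {X Y}

/-- The map `ξ : B_{(X ⊗̂_π Y)*} → (B_{Y*}, w*)^ℕ`, `ξ(S) = (S_X(xₙ))ₙ`. -/
noncomputable def xiMap (x : ℕ → X) (S : dualBallBilin X Y) : ℕ → WeakDual ℝ Y :=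
  fun n => StrongDual.toWeakDual (S.1 (x n))

end Defs

/-!
On the dual ball the weak* topology is the topology of pointwise convergence on pairs
`(a, b) ∈ X × Y`, since every tensor is a finite sum of elementary ones. The forms in the ball
are uniformly bounded, hence equicontinuous, so the set of `a ∈ X` at which `S ↦ S a b` is
continuous for the topology induced by `ξ` is a closed subspace. It contains the `xₙ`, hence the
unit ball, hence all of `X`: `ξ` induces the weak* topology, which is Hausdorff, so `ξ` is
injective as well.
-/

open Topology Set

section ContinuousEval

variable {Z R M N : Type*} [TopologicalSpace Z] [Semiring R] [AddCommMonoid M] [Module R M]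
  [TopologicalSpace N] [AddCommMonoid N] [Module R N] [ContinuousAdd N] [ContinuousConstSMul R N]

variable (R) in
def continuousEvalSubmodule (T : Z → M →ₗ[R] N) : Submodule R M where
  carrier := {a | Continuous fun z => T z a}
  zero_mem' := by simpa using continuous_const
  add_mem' {a b} ha hb := by
    simp only [mem_ofPred_eq, map_add]
    exact ha.add hb
  smul_mem' c a ha := by
    simp only [mem_ofPred_eq, map_smul]
    exact ha.const_smul c

end ContinuousEval

section UniformlyBounded

variable {Z 𝕜 E F : Type*} [TopologicalSpace Z] [NontriviallyNormedField 𝕜]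
  [NormedAddCommGroup E] [NormedSpace 𝕜 E] [NormedAddCommGroup F] [NormedSpace 𝕜 F]
  {T : Z → E →L[𝕜] F}

lemma isClosed_setOf_continuous_apply (hT : ∃ C, ∀ z, ‖T z‖ ≤ C) :
    IsClosed {a | Continuous fun z => T z a} := by
  have hT : Equicontinuous ((↑) ∘ T) := ((NormedSpace.equicontinuous_TFAE T).out 5 1).1 hT
  simp only [continuous_iff_continuousAt, ofPred_forall]
  exact isClosed_iInter fun z => hT.isClosed_setOfPred_tendsto (T z).continuous

lemma continuous_apply_of_closure_mem_nhds_zero (hT : ∃ C, ∀ z, ‖T z‖ ≤ C) {D : Set E}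
    (hD : closure D ∈ 𝓝 0) (hcont : ∀ d ∈ D, Continuous fun z => T z d) (a : E) :
    Continuous fun z => T z a := by
  set V := continuousEvalSubmodule 𝕜 fun z => (T z : E →ₗ[𝕜] F)
  have hDV : closure D ⊆ V := (isClosed_setOf_continuous_apply hT).closure_subset_iff.2 hcont
  have : V = ⊤ := (absorbent_nhds_zero (Filter.mem_of_superset hD hDV)).submodule_eq_top
  exact (this ▸ Submodule.mem_top : a ∈ V)

end UniformlyBounded

section DualBall

variable {X Y : Type*} [NormedAddCommGroup X] [NormedSpace ℝ X]
  [NormedAddCommGroup Y] [NormedSpace ℝ Y]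

@[simp]
lemma tensorEval_tmul (S : X →L[ℝ] Y →L[ℝ] ℝ) (a : X) (b : Y) :
    tensorEval X Y S (a ⊗ₜ b) = S a b := by
  simp [tensorEval, bilinL, TensorProduct.lift.equiv]

namespace dualBallBilin

lemma isEmbedding_tensorEval :
    IsEmbedding fun S : dualBallBilin X Y => ⇑(tensorEval X Y S.1) := by
  refine ⟨⟨induced_compose⟩, fun S S' h => Subtype.ext ?_⟩
  ext a b
  simpa using congrFun h (a ⊗ₜ b)

instance : T2Space (dualBallBilin X Y) := isEmbedding_tensorEval.t2Space

lemma continuous_iff {Z : Type*} [TopologicalSpace Z] {F : Z → dualBallBilin X Y} :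
    Continuous F ↔ ∀ a b, Continuous fun z => (F z).1 a b := by
  rw [isEmbedding_tensorEval.continuous_iff, continuous_pi_iff]
  refine ⟨fun h a b => by simpa using h (a ⊗ₜ b), fun h u => ?_⟩
  set V := continuousEvalSubmodule ℝ fun z => tensorEval X Y (F z).1
  have : V = ⊤ := eq_top_iff.2 <| (TensorProduct.span_tmul_eq_top ℝ X Y).ge.trans <|
    Submodule.span_le.2 <| by
      rintro _ ⟨a, b, rfl⟩
      change Continuous _
      simpa using h a b
  exact (this ▸ Submodule.mem_top : u ∈ V)

end dualBallBilin

end DualBall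

section XiMap

variable {X Y : Type*} [NormedAddCommGroup X] [NormedSpace ℝ X]
  [NormedAddCommGroup Y] [NormedSpace ℝ Y] {x : ℕ → X}

lemma continuous_xiMap : Continuous (xiMap (Y := Y) x) :=
  continuous_pi fun n => WeakDual.continuous_of_continuous_eval fun y =>
    dualBallBilin.continuous_iff.1 continuous_id (x n) y

lemma continuous_of_continuous_xiMap_comp (hx : closure (range x) ∈ 𝓝 0) {Z : Type*}
    [tZ : TopologicalSpace Z] {F : Z → dualBallBilin X Y} (hF : Continuous (xiMap x ∘ F)) :
    Continuous F := by
  refine dualBallBilin.continuous_iff.2 fun a b => ?_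
  have hbound (z : Z) : ‖(F z).1.flip b‖ ≤ 1 * ‖b‖ :=
    (F z).1.flip.le_of_opNorm_le ((F z).1.opNorm_flip ▸ (F z).2) b
  refine continuous_apply_of_closure_mem_nhds_zero ⟨_, hbound⟩ hx ?_ a
  rintro _ ⟨n, rfl⟩
  exact (WeakDual.eval_continuous b).comp ((continuous_apply n).comp hF)

lemma isEmbedding_xiMap (hx : closure (range x) ∈ 𝓝 0) :
    IsEmbedding (xiMap (Y := Y) x) :=
  IsInducing.isEmbedding ⟨le_antisymm continuous_xiMap.le_induced <| continuous_id_iff_le.1 <|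
    -- `ξ` reflects continuity; apply this to `id` out of the topology induced by `ξ`
    continuous_of_continuous_xiMap_comp hx (tZ := .induced (xiMap x) _) (F := id)
      continuous_induced_dom⟩

end XiMap

theorem xiMap_affine_embedding_general
    {X Y : Type*} [NormedAddCommGroup X] [NormedSpace ℝ X]
    [NormedAddCommGroup Y] [NormedSpace ℝ Y]
    (x : ℕ → X)
    (hdense : closure (Set.range x) = Metric.closedBall (0 : X) 1) :
    (∀ (S : dualBallBilin X Y) (n : ℕ), ‖S.1 (x n)‖ ≤ 1) ∧
    (∀ (S S' W : dualBallBilin X Y) (t : ℝ), 0 ≤ t → t ≤ 1 →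
      W.1 = t • S.1 + (1 - t) • S'.1 →
      xiMap x W = fun n => t • xiMap x S n + (1 - t) • xiMap x S' n) ∧
    Topology.IsEmbedding (xiMap (X := X) (Y := Y) x) := by
  refine ⟨fun S n => ?_, fun S S' W t _ _ hW => ?_, isEmbedding_xiMap ?_⟩
  · have hxn : ‖x n‖ ≤ 1 := mem_closedBall_zero_iff.1 (hdense ▸ subset_closure (mem_range_self n))
    simpa using S.1.le_of_opNorm_le_of_le S.2 hxn
  · funext n
    simp [xiMap, hW]
  · exact hdense ▸ Metric.closedBall_mem_nhds 0 one_pos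

/-- Let `X` be a separable Banach space with a dense sequence
`(xₙ) ⊆ B_X` and `Y` a Banach space. The map
`ξ : (B_{(X ⊗̂_π Y)*}, w*) → (B_{Y*}, w*)^ℕ`, `ξ(S) := (S_X(xₙ))ₙ`, is an affine
homeomorphic embedding (each value `S_X(xₙ)` has norm at most `1`, so `ξ` takes values
in `(B_{Y*})^ℕ`). -/
theorem xiMap_affine_embedding
    {X Y : Type*} [NormedAddCommGroup X] [NormedSpace ℝ X] [CompleteSpace X]
    [NormedAddCommGroup Y] [NormedSpace ℝ Y] [CompleteSpace Y]
    (x : ℕ → X) (hx : ∀ n, x n ∈ Metric.closedBall (0 : X) 1)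
    (hdense : closure (Set.range x) = Metric.closedBall (0 : X) 1) :
    (∀ (S : dualBallBilin X Y) (n : ℕ), ‖S.1 (x n)‖ ≤ 1) ∧
    (∀ (S S' W : dualBallBilin X Y) (t : ℝ), 0 ≤ t → t ≤ 1 →
      W.1 = t • S.1 + (1 - t) • S'.1 →
      xiMap x W = fun n => t • xiMap x S n + (1 - t) • xiMap x S' n) ∧
    Topology.IsEmbedding (xiMap (X := X) (Y := Y) x) :=
  xiMap_affine_embedding_general x hdense
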